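/- arXiv:0801.3480 — 2 statements merged into one kernel-verified Lean document; each statement's English description precedes it below -/
import Mathlib

section
/- Let g be a finite-dimensional Lie algebra and P a symmetric invariant bilinear form on g, regarded as the closed degree-4 element P = P_{ab}(σt^a)∧(σt^b) of the Weil algebra W(g). Then the degree-3 element cs := P_{ab}(d_W t^a)∧t^b + (1/3) C_{abc} t^a∧t^b∧t^c (where C_{abc} := P_{ad}C^d_{bc}) satisfies d_W(cs) = P, and its restriction along i* : W(g) → CE(g) is i*(cs) = (1/3)C_{abc} t^a∧t^b∧t^c − (1/2)C_{abc}t^a∧t^b∧t^c, a scalar multiple of the canonical 3-cocycle μ(x,y,z) = P(x,[y,z]). In particular P transgresses to a nonzero multiple of μ. -/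
/-!
Write `q^a = C^a_{bc} t^b t^c`, so that `d t^a = -½ q^a + σt^a` with `d t^a` even and closed.
Then `d (P_{ab} d t^a t^b) = P(dt, dt)`. Invariance makes `C_{abc}` totally antisymmetric, so the
three Leibniz terms of `d (C_{abc} t^a t^b t^c)` agree and sum to `3 P(dt, q)`. Expanding
`P(σt, σt) = P(dt + ½ q, dt + ½ q)` leaves the extra term `¼ P(q, q)`, which is
`P(t_d, [t_e, [t_b, t_c]]) t^d t^e t^b t^c` and vanishes by the Jacobi identity, because a cyclic
permutation of three odd generators does not change their product. Under `i*` the shifted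
generators die, so `i* (P_{ab} d t^a t^b) = -½ i* P(q, t) = -½ C_{abc} t^a t^b t^c`.
-/

theorem Finset.sum_rotate₃ {ι M : Type*} [Fintype ι] [AddCommMonoid M] (f : ι → ι → ι → M) :
    ∑ a, ∑ b, ∑ c, f a b c = ∑ a, ∑ b, ∑ c, f b c a := by
  calc ∑ a, ∑ b, ∑ c, f a b c = ∑ a, ∑ c, ∑ b, f a b c :=
        Finset.sum_congr rfl fun _ _ => Finset.sum_comm
    _ = ∑ c, ∑ a, ∑ b, f a b c := Finset.sum_comm

section LieAlgebra

variable {K L : Type*} [CommRing K] [LieRing L] [LieAlgebra K L] (Bl : L →ₗ[K] L →ₗ[K] K)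

theorem bilin_lie_swap (hinv : ∀ x y z : L, Bl ⁅x, y⁆ z = Bl x ⁅y, z⁆) (x y z : L) :
    Bl y ⁅x, z⁆ = -Bl x ⁅y, z⁆ := by
  rw [← hinv, ← hinv, ← lie_skew x y, map_neg, LinearMap.neg_apply, neg_neg]

theorem bilin_lie_rotate (hsymm : ∀ x y : L, Bl x y = Bl y x)
    (hinv : ∀ x y z : L, Bl ⁅x, y⁆ z = Bl x ⁅y, z⁆) (x y z : L) :
    Bl x ⁅y, z⁆ = Bl z ⁅x, y⁆ := by
  rw [← hinv, hsymm]

end LieAlgebra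

theorem sum_smul_lie_lie_eq_zero {ι K L M : Type*} [Fintype ι] [Field K] [CharZero K]
    [LieRing L] [LieAlgebra K L] [AddCommGroup M] [Module K M]
    (φ : L →ₗ[K] K) (x : ι → L) (W : ι → ι → ι → M) (hW : ∀ a b c, W a b c = W b c a) :
    ∑ a, ∑ b, ∑ c, φ ⁅x a, ⁅x b, x c⁆⁆ • W a b c = 0 := by
  set S := ∑ a, ∑ b, ∑ c, φ ⁅x a, ⁅x b, x c⁆⁆ • W a b c
  have hrot : ∀ ψ : ι → ι → ι → L,
      ∑ a, ∑ b, ∑ c, φ (ψ a b c) • W a b c = ∑ a, ∑ b, ∑ c, φ (ψ b c a) • W a b c := by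
    intro ψ
    rw [Finset.sum_rotate₃]
    simp only [← hW]
  have h3 : (3 : K) • S = 0 := by
    calc (3 : K) • S
        = S + ∑ a, ∑ b, ∑ c, φ ⁅x b, ⁅x c, x a⁆⁆ • W a b c
            + ∑ a, ∑ b, ∑ c, φ ⁅x c, ⁅x a, x b⁆⁆ • W a b c := by
          rw [← hrot fun a b c => ⁅x b, ⁅x c, x a⁆⁆, ← hrot fun a b c => ⁅x a, ⁅x b, x c⁆⁆]
          module
      _ = 0 := by
          simp only [S, ← Finset.sum_add_distrib, ← add_smul, ← map_add, lie_jacobi, map_zero,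
            zero_smul, Finset.sum_const_zero]
  simpa using congrArg ((3 : K)⁻¹ • ·) h3

theorem mul_mul_rotate_of_odd {R A : Type*} [CommSemiring R] [Ring A] [Algebra R A]
    {ε : A →ₐ[R] A} (heven : ∀ x y : A, ε x = x → x * y = y * x) {y z : A} (hy : ε y = -y)
    (hz : ε z = -z) (x : A) : x * y * z = y * z * x := by
  rw [mul_assoc, heven (y * z) x (by rw [map_mul, hy, hz, neg_mul_neg])]

section Pairing

variable {ι K L A : Type*} [Fintype ι] [CommRing K] [LieRing L] [LieAlgebra K L]
  [Ring A] [Algebra K A] (Bl : L →ₗ[K] L →ₗ[K] K) (Bg : Module.Basis ι K L)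

noncomputable def invPairing : (ι → A) →ₗ[K] (ι → A) →ₗ[K] A :=
  LinearMap.mk₂ K (fun u v => ∑ a, ∑ b, Bl (Bg a) (Bg b) • (u a * v b))
    (fun u u' v => by simp only [Pi.add_apply, add_mul, smul_add, Finset.sum_add_distrib])
    (fun c u v => by simp only [Pi.smul_apply, smul_mul_assoc, smul_comm _ c, Finset.smul_sum])
    (fun u v v' => by simp only [Pi.add_apply, mul_add, smul_add, Finset.sum_add_distrib])
    (fun c u v => by simp only [Pi.smul_apply, mul_smul_comm, smul_comm _ c, Finset.smul_sum])

theorem invPairing_apply (u v : ι → A) :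
    invPairing Bl Bg u v = ∑ a, ∑ b, Bl (Bg a) (Bg b) • (u a * v b) := rfl

noncomputable def cubicPairing (u v w : ι → A) : A :=
  ∑ a, ∑ b, ∑ c, Bl (Bg a) ⁅Bg b, Bg c⁆ • (u a * v b * w c)

/-- The components `C^a_{bc} t^b t^c`, so that `d_W t^a = -½ bracketSq Bg t a + σt^a`. -/
noncomputable def bracketSq (t : ι → A) (a : ι) : A :=
  ∑ b, ∑ c, Bg.repr ⁅Bg b, Bg c⁆ a • (t b * t c)

theorem Module.Basis.sum_repr_mul_apply (φ : L →ₗ[K] K) (x : L) :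
    ∑ a, Bg.repr x a * φ (Bg a) = φ x := by
  conv_rhs => rw [← Bg.sum_repr x]
  simp only [map_sum, map_smul, smul_eq_mul]

theorem sum_smul_bracketSq (φ : L →ₗ[K] K) (t : ι → A) :
    ∑ a, φ (Bg a) • bracketSq Bg t a = ∑ b, ∑ c, φ ⁅Bg b, Bg c⁆ • (t b * t c) := by
  simp only [bracketSq, Finset.smul_sum, smul_smul]
  rw [Finset.sum_comm]
  refine Finset.sum_congr rfl fun b _ => ?_
  rw [Finset.sum_comm]
  refine Finset.sum_congr rfl fun c _ => ?_
  rw [← Finset.sum_smul]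
  simp only [mul_comm (φ _), Bg.sum_repr_mul_apply]

theorem invPairing_bracketSq (u t : ι → A) :
    invPairing Bl Bg u (bracketSq Bg t) = cubicPairing Bl Bg u t t := by
  refine Finset.sum_congr rfl fun a _ => ?_
  calc ∑ b, Bl (Bg a) (Bg b) • (u a * bracketSq Bg t b)
      = u a * ∑ b, Bl (Bg a) (Bg b) • bracketSq Bg t b := by
        simp only [Finset.mul_sum, mul_smul_comm]
    _ = ∑ b, ∑ c, Bl (Bg a) ⁅Bg b, Bg c⁆ • (u a * t b * t c) := by
        simp only [sum_smul_bracketSq, Finset.mul_sum, mul_smul_comm, mul_assoc]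

theorem invPairing_comm (hsymm : ∀ x y : L, Bl x y = Bl y x) {u v : ι → A}
    (huv : ∀ a b, u a * v b = v b * u a) : invPairing Bl Bg u v = invPairing Bl Bg v u := by
  rw [invPairing_apply, invPairing_apply, Finset.sum_comm]
  exact Finset.sum_congr rfl fun b _ => Finset.sum_congr rfl fun a _ => by rw [hsymm, huv]

theorem cubicPairing_swap (hinv : ∀ x y z : L, Bl ⁅x, y⁆ z = Bl x ⁅y, z⁆) {u : ι → A}
    (hu : ∀ a x, u a * x = x * u a) (v w : ι → A) :
    cubicPairing Bl Bg v u w = -cubicPairing Bl Bg u v w := by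
  rw [cubicPairing, cubicPairing, Finset.sum_comm]
  simp only [← Finset.sum_neg_distrib]
  exact Finset.sum_congr rfl fun b _ => Finset.sum_congr rfl fun a _ => Finset.sum_congr rfl
    fun c _ => by rw [bilin_lie_swap Bl hinv, hu, neg_smul]

theorem cubicPairing_rotate (hsymm : ∀ x y : L, Bl x y = Bl y x)
    (hinv : ∀ x y z : L, Bl ⁅x, y⁆ z = Bl x ⁅y, z⁆) {u : ι → A}
    (hu : ∀ a x, u a * x = x * u a) (v w : ι → A) :
    cubicPairing Bl Bg v w u = cubicPairing Bl Bg u v w := by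
  rw [cubicPairing, cubicPairing, Finset.sum_rotate₃]
  exact Finset.sum_congr rfl fun a _ => Finset.sum_congr rfl fun b _ => Finset.sum_congr rfl
    fun c _ => by rw [bilin_lie_rotate Bl hsymm hinv (Bg b), mul_assoc (u a), hu a (v b * w c)]

theorem map_invPairing {B : Type*} [Ring B] [Algebra K B] (f : A →ₐ[K] B) (u v : ι → A) :
    f (invPairing Bl Bg u v) = invPairing Bl Bg (fun a => f (u a)) (fun b => f (v b)) := by
  simp only [invPairing_apply, map_sum, map_smul, map_mul]

theorem map_cubicPairing {B : Type*} [Ring B] [Algebra K B] (f : A →ₐ[K] B) (u v w : ι → A) :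
    f (cubicPairing Bl Bg u v w)
      = cubicPairing Bl Bg (fun a => f (u a)) (fun b => f (v b)) (fun c => f (w c)) := by
  simp only [cubicPairing, map_sum, map_smul, map_mul]

theorem map_bracketSq_of_odd {ε : A →ₐ[K] A} {t : ι → A} (ht : ∀ a, ε (t a) = -t a) (a : ι) :
    ε (bracketSq Bg t a) = bracketSq Bg t a := by
  simp only [bracketSq, map_sum, map_smul, map_mul, ht, neg_mul_neg]

variable {ε : A →ₐ[K] A} {d : A →ₗ[K] A}

theorem leibniz_invPairing_of_closed_of_even (hleib : ∀ x y : A, d (x * y) = d x * y + ε x * d y)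
    {u : ι → A} (hdu : ∀ a, d (u a) = 0) (hεu : ∀ a, ε (u a) = u a) (v : ι → A) :
    d (invPairing Bl Bg u v) = invPairing Bl Bg u (fun b => d (v b)) := by
  simp only [invPairing_apply, map_sum, map_smul, hleib, hdu, hεu, zero_mul, zero_add]

theorem leibniz_cubicPairing_of_odd (hleib : ∀ x y : A, d (x * y) = d x * y + ε x * d y)
    {t : ι → A} (ht : ∀ a, ε (t a) = -t a) :
    d (cubicPairing Bl Bg t t t) = cubicPairing Bl Bg (fun a => d (t a)) t t
      - cubicPairing Bl Bg t (fun b => d (t b)) t + cubicPairing Bl Bg t t (fun c => d (t c)) := by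
  have hleib₃ : ∀ a b c, d (t a * t b * t c)
      = d (t a) * t b * t c - t a * d (t b) * t c + t a * t b * d (t c) := by
    intro a b c
    rw [hleib, hleib, map_mul, ht, ht]
    noncomm_ring
  simp only [cubicPairing, map_sum, map_smul, hleib₃, smul_add, smul_sub, Finset.sum_add_distrib,
    Finset.sum_sub_distrib]

theorem d_cubicPairing (hsymm : ∀ x y : L, Bl x y = Bl y x)
    (hinv : ∀ x y z : L, Bl ⁅x, y⁆ z = Bl x ⁅y, z⁆)
    (hleib : ∀ x y : A, d (x * y) = d x * y + ε x * d y)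
    {t : ι → A} (ht : ∀ a, ε (t a) = -t a) (hdt : ∀ a x, d (t a) * x = x * d (t a)) :
    d (cubicPairing Bl Bg t t t)
      = (3 : K) • invPairing Bl Bg (fun a => d (t a)) (bracketSq Bg t) := by
  rw [leibniz_cubicPairing_of_odd Bl Bg hleib ht, cubicPairing_swap Bl Bg hinv hdt,
    cubicPairing_rotate Bl Bg hsymm hinv hdt, invPairing_bracketSq]
  module

end Pairing

theorem invPairing_bracketSq_self {ι K L A : Type*} [Fintype ι] [Field K] [CharZero K]
    [LieRing L] [LieAlgebra K L] [Ring A] [Algebra K A] (Bl : L →ₗ[K] L →ₗ[K] K)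
    (Bg : Module.Basis ι K L) (hinv : ∀ x y z : L, Bl ⁅x, y⁆ z = Bl x ⁅y, z⁆) {t : ι → A}
    (hcyc : ∀ a b c, t a * t b * t c = t b * t c * t a) :
    invPairing Bl Bg (bracketSq Bg t) (bracketSq Bg t) = 0 := by
  calc invPairing Bl Bg (bracketSq Bg t) (bracketSq Bg t)
      = ∑ b, (∑ a, Bl.flip (Bg b) (Bg a) • bracketSq Bg t a) * bracketSq Bg t b := by
        rw [invPairing_apply, Finset.sum_comm]
        simp only [Finset.sum_mul, smul_mul_assoc, LinearMap.flip_apply]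
    _ = ∑ d, ∑ e, (t d * t e) * ∑ b, Bl ⁅Bg d, Bg e⁆ (Bg b) • bracketSq Bg t b := by
        simp_rw [sum_smul_bracketSq Bg (Bl.flip _)]
        simp only [Finset.sum_mul, Finset.mul_sum, smul_mul_assoc, mul_smul_comm,
          LinearMap.flip_apply]
        rw [Finset.sum_comm]
        exact Finset.sum_congr rfl fun _ _ => Finset.sum_comm
    _ = ∑ d, t d * ∑ e, ∑ b, ∑ c, Bl (Bg d) ⁅Bg e, ⁅Bg b, Bg c⁆⁆ • (t e * t b * t c) := by
        simp only [sum_smul_bracketSq]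
        simp only [hinv, Finset.mul_sum, mul_smul_comm, mul_assoc]
    _ = 0 := by
        simp only [sum_smul_lie_lie_eq_zero _ Bg _ hcyc, mul_zero, Finset.sum_const_zero]

theorem bilinear_invariant_polynomial_transgresses_general
    {ι : Type*} [Fintype ι]
    (g : Type*) [LieRing g] [LieAlgebra ℝ g] (Bg : Module.Basis ι ℝ g)
    (Bl : g →ₗ[ℝ] g →ₗ[ℝ] ℝ)
    (hsymm : ∀ x y : g, Bl x y = Bl y x)
    (hinv : ∀ x y z : g, Bl ⁅x, y⁆ z = Bl x ⁅y, z⁆)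
    -- the Weil algebra W(g):
    (A : Type*) [Ring A] [Algebra ℝ A]
    (ε : A →ₐ[ℝ] A) (d : A →ₗ[ℝ] A)
    (heven : ∀ x y : A, ε x = x → x * y = y * x)
    (hleib : ∀ x y : A, d (x * y) = d x * y + ε x * d y)
    (hd2 : ∀ x : A, d (d x) = 0)
    (t s : ι → A)
    (het : ∀ a, ε (t a) = - t a)
    (hes : ∀ a, ε (s a) = s a)
    (hdt : ∀ a, d (t a) =
      (-(1 : ℝ)/2) • (∑ b : ι, ∑ c : ι, ((Bg.repr ⁅Bg b, Bg c⁆) a) • (t b * t c)) + s a)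
    -- the Chevalley–Eilenberg algebra CE(g) and the surjection i* :
    (B : Type*) [Ring B] [Algebra ℝ B]
    (tc : ι → B)
    (i : A →ₐ[ℝ] B)
    (hit : ∀ a, i (t a) = tc a)
    (his : ∀ a, i (s a) = 0) :
    -- the Chern-Simons element transgresses P to a nonzero multiple of μ:
    d (∑ a : ι, ∑ b : ι, (Bl (Bg a) (Bg b)) • (d (t a) * t b)
        + ((1 : ℝ)/3) • ∑ a : ι, ∑ b : ι, ∑ c : ι,
            (Bl (Bg a) ⁅Bg b, Bg c⁆) • (t a * t b * t c))
      = ∑ a : ι, ∑ b : ι, (Bl (Bg a) (Bg b)) • (s a * s b) ∧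
    i (∑ a : ι, ∑ b : ι, (Bl (Bg a) (Bg b)) • (d (t a) * t b)
        + ((1 : ℝ)/3) • ∑ a : ι, ∑ b : ι, ∑ c : ι,
            (Bl (Bg a) ⁅Bg b, Bg c⁆) • (t a * t b * t c))
      = ((1 : ℝ)/3 - (1 : ℝ)/2) • ∑ a : ι, ∑ b : ι, ∑ c : ι,
            (Bl (Bg a) ⁅Bg b, Bg c⁆) • (tc a * tc b * tc c) := by
  have hdt' : ∀ a, d (t a) = (-(1 : ℝ) / 2) • bracketSq Bg t a + s a := hdt
  have hq_even := map_bracketSq_of_odd Bg het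
  have hdt_even : ∀ a, ε (d (t a)) = d (t a) := fun a => by
    rw [hdt' a, map_add, map_smul, hq_even, hes]
  have hq_central : ∀ a x, bracketSq Bg t a * x = x * bracketSq Bg t a :=
    fun a x => heven _ x (hq_even a)
  have hdt_central : ∀ a x, d (t a) * x = x * d (t a) := fun a x => heven _ x (hdt_even a)
  have hcyc : ∀ a b c, t a * t b * t c = t b * t c * t a :=
    fun a b c => mul_mul_rotate_of_odd heven (het b) (het c) _
  have hs : s = (fun a => d (t a)) + ((1 : ℝ) / 2) • bracketSq Bg t := by
    funext a
    rw [Pi.add_apply, Pi.smul_apply, hdt' a]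
    module
  change d (invPairing Bl Bg (fun a => d (t a)) t + ((1 : ℝ) / 3) • cubicPairing Bl Bg t t t)
      = invPairing Bl Bg s s ∧
    i (invPairing Bl Bg (fun a => d (t a)) t + ((1 : ℝ) / 3) • cubicPairing Bl Bg t t t)
      = ((1 : ℝ) / 3 - 1 / 2) • cubicPairing Bl Bg tc tc tc
  constructor
  · rw [map_add, map_smul, leibniz_invPairing_of_closed_of_even Bl Bg hleib (fun a => hd2 _)
      hdt_even, d_cubicPairing Bl Bg hsymm hinv hleib het hdt_central, hs]
    simp only [map_add, map_smul, LinearMap.add_apply, LinearMap.smul_apply,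
      invPairing_bracketSq_self Bl Bg hinv hcyc,
      invPairing_comm Bl Bg hsymm (fun a b => hq_central a _)]
    module
  · have his_pairing : i (invPairing Bl Bg s t) = 0 := by
      rw [map_invPairing]
      simp [his, invPairing_apply]
    rw [eq_sub_of_add_eq hs.symm, map_sub, map_smul, LinearMap.sub_apply, LinearMap.smul_apply,
      invPairing_comm Bl Bg hsymm (fun a b => hq_central a _), invPairing_bracketSq]
    simp only [map_add, map_sub, map_smul, his_pairing, map_cubicPairing, hit]
    module

/-- **Transgression of an invariant bilinear form to the canonical 3-cocycle.**
Let `g` be a finite-dimensional real Lie algebra with basis `Bg`, invariant symmetric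
bilinear form `Bl` (components `P_{ab} = Bl (Bg a) (Bg b)`, and
`C_{abc} = Bl (Bg a) ⁅Bg b, Bg c⁆`), let `A` be (a model of) the Weil algebra `W(g)` with
generators `t a, s a = σ t a` and let `i : W(g) → CE(g)` be the canonical surjection
killing the shifted generators.  Then the degree-3 element
`cs = P_{ab} (d t^a) t^b + (1/3) C_{abc} t^a t^b t^c`
satisfies `d cs = P_{ab} σt^a σt^b`, and
`i(cs) = (1/3 - 1/2) C_{abc} t^a t^b t^c`, a (nonzero) scalar multiple of the canonical
3-cocycle `μ(x,y,z) = Bl(x,[y,z])`; hence `P` transgresses to a nonzero multiple of `μ`. -/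
theorem bilinear_invariant_polynomial_transgresses
    {ι : Type*} [Fintype ι]
    (g : Type*) [LieRing g] [LieAlgebra ℝ g] (Bg : Module.Basis ι ℝ g)
    (Bl : g →ₗ[ℝ] g →ₗ[ℝ] ℝ)
    (hsymm : ∀ x y : g, Bl x y = Bl y x)
    (hinv : ∀ x y z : g, Bl ⁅x, y⁆ z = Bl x ⁅y, z⁆)
    -- the Weil algebra W(g):
    (A : Type*) [Ring A] [Algebra ℝ A]
    (ε : A →ₐ[ℝ] A) (d : A →ₗ[ℝ] A)
    (hee : ∀ x : A, ε (ε x) = x)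
    (heven : ∀ x y : A, ε x = x → x * y = y * x)
    (hodd : ∀ x y : A, ε x = -x → ε y = -y → x * y = -(y * x))
    (hleib : ∀ x y : A, d (x * y) = d x * y + ε x * d y)
    (hd2 : ∀ x : A, d (d x) = 0)
    (t s : ι → A)
    (het : ∀ a, ε (t a) = - t a)
    (hes : ∀ a, ε (s a) = s a)
    (hdt : ∀ a, d (t a) =
      (-(1 : ℝ)/2) • (∑ b : ι, ∑ c : ι, ((Bg.repr ⁅Bg b, Bg c⁆) a) • (t b * t c)) + s a)
    (hds : ∀ a, d (s a) =
      - ∑ b : ι, ∑ c : ι, ((Bg.repr ⁅Bg b, Bg c⁆) a) • (t b * s c))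
    -- the Chevalley–Eilenberg algebra CE(g) and the surjection i* :
    (B : Type*) [Ring B] [Algebra ℝ B]
    (tc : ι → B)
    (i : A →ₐ[ℝ] B)
    (hit : ∀ a, i (t a) = tc a)
    (his : ∀ a, i (s a) = 0) :
    -- the Chern-Simons element transgresses P to a nonzero multiple of μ:
    d (∑ a : ι, ∑ b : ι, (Bl (Bg a) (Bg b)) • (d (t a) * t b)
        + ((1 : ℝ)/3) • ∑ a : ι, ∑ b : ι, ∑ c : ι,
            (Bl (Bg a) ⁅Bg b, Bg c⁆) • (t a * t b * t c))
      = ∑ a : ι, ∑ b : ι, (Bl (Bg a) (Bg b)) • (s a * s b) ∧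
    i (∑ a : ι, ∑ b : ι, (Bl (Bg a) (Bg b)) • (d (t a) * t b)
        + ((1 : ℝ)/3) • ∑ a : ι, ∑ b : ι, ∑ c : ι,
            (Bl (Bg a) ⁅Bg b, Bg c⁆) • (t a * t b * t c))
      = ((1 : ℝ)/3 - (1 : ℝ)/2) • ∑ a : ι, ∑ b : ι, ∑ c : ι,
            (Bl (Bg a) ⁅Bg b, Bg c⁆) • (tc a * tc b * tc c) :=
  bilinear_invariant_polynomial_transgresses_general g Bg Bl hsymm hinv A ε d heven hleib hd2 t s
    het hes hdt B tc i hit his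
end

section
/- Let t : h ↪ g be the inclusion of an ideal into a finite-dimensional Lie algebra g. The canonical DGCA morphism p : CE(h ↪ g) → CE(g) (identity on g*, zero on h*[1]) composed with t* : CE(g) → CE(h) is chain-homotopic to zero: the degree −1 derivation τ on the mapping cone with τ(σt*(a)) = t*(a) and τ|_{g*} = 0, extended appropriately, satisfies [d, τ] = t* ∘ p on generators, exhibiting CE(h ↪ g) as lying in the weak kernel of t*. -/
/-!
On a generator `u a` of `g*`, the differential is a quadratic term in the `u`'s, which `τ` kills,
plus `∑ j, (t* a)_j • v j`, which `τ` sends to `t* a`. On a generator `v j`, expanding in the basis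
of `I` the factor `t* (u b)` of the mixed terms of `τ (d (v j))` turns the structure constants of
`⁅g, I⁆` into those of `I`, so that `τ (d (v j)) = -dₕ (w j)`.
-/

theorem Module.Basis.sum_repr_mul_apply_s17 {ι R M : Type*} [Fintype ι] [CommSemiring R]
    [AddCommMonoid M] [Module R M] (B : Module.Basis ι R M) (f : M →ₗ[R] R) (x : M) :
    ∑ i, B.repr x i * f (B i) = f x := by
  conv_rhs => rw [← B.sum_repr x]
  simp only [map_sum, map_smul, smul_eq_mul]

theorem LieIdeal.sum_repr_mul_repr_lie {ι κ R g : Type*} [Fintype ι] [CommRing R] [LieRing g]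
    [LieAlgebra R g] (Bgb : Module.Basis ι R g) (I : LieIdeal R g) (BI : Module.Basis κ R I)
    (j m k : κ) :
    ∑ b, Bgb.repr (BI m : g) b * BI.repr ⟨⁅Bgb b, (BI k : g)⁆, I.lie_mem (BI k).2⟩ j
      = BI.repr ⟨⁅(BI m : g), (BI k : g)⁆, I.lie_mem (BI k).2⟩ j :=
  Bgb.sum_repr_mul_apply_s17
    (BI.coord j ∘ₗ LinearMap.applyₗ (BI k) ∘ₗ (LieModule.toEnd R g I : g →ₗ[R] Module.End R I))
    (BI m : g)

theorem Finset.sum_sum_smul_sum_smul_mul {ι κ R A : Type*} [Fintype ι] [Fintype κ]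
    [CommSemiring R] [Semiring A] [Algebra R A]
    (c : ι → κ → R) (e : κ → ι → R) (x y : κ → A) :
    ∑ b, ∑ k, c b k • ((∑ m, e m b • x m) * y k)
      = ∑ k, ∑ m, (∑ b, e m b * c b k) • (x m * y k) := by
  simp only [Finset.sum_mul, Finset.smul_sum, Finset.sum_smul, smul_mul_assoc, smul_smul]
  rw [Finset.sum_comm]
  refine Finset.sum_congr rfl fun k _ => ?_
  rw [Finset.sum_comm]
  simp only [mul_comm]

theorem mapping_cone_weak_kernel_homotopy_general
    {ι κ : Type*} [Fintype ι] [Fintype κ]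
    (g : Type*) [LieRing g] [LieAlgebra ℝ g] (Bgb : Module.Basis ι ℝ g)
    (I : LieIdeal ℝ g) (BI : Module.Basis κ ℝ I)
    -- the mapping cone algebra A = CE(I ↪ g):
    (A : Type*) [Ring A] [Algebra ℝ A]
    (d : A →ₗ[ℝ] A)
    (u : ι → A) (v : κ → A)
    (hdu : ∀ a, d (u a) =
      (-(1 : ℝ)/2) • (∑ b : ι, ∑ c : ι, ((Bgb.repr ⁅Bgb b, Bgb c⁆) a) • (u b * u c))
        + ∑ j : κ, ((Bgb.repr (↑(BI j) : g)) a) • v j)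
    (hdv : ∀ j, d (v j) =
      - ∑ b : ι, ∑ k : κ,
          ((BI.repr ⟨⁅Bgb b, (↑(BI k) : g)⁆, I.lie_mem (BI k).2⟩) j) • (u b * v k))
    -- CE(g):
    (Bg : Type*) [Ring Bg] [Algebra ℝ Bg]
    (ug : ι → Bg)
    -- CE(I):
    (Bh : Type*) [Ring Bh] [Algebra ℝ Bh]
    (dh : Bh →ₗ[ℝ] Bh)
    (w : κ → Bh)
    (hdw : ∀ j, dh (w j) =
      (-(1 : ℝ)/2) • (∑ b : κ, ∑ c : κ,
        ((BI.repr ⟨⁅(↑(BI b) : g), (↑(BI c) : g)⁆, I.lie_mem (BI c).2⟩) j) • (w b * w c)))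
    -- the canonical projection p : CE(I ↪ g) → CE(g)  and the restriction t* :
    (p : A →ₐ[ℝ] Bg)
    (hpu : ∀ a, p (u a) = ug a)
    (hpv : ∀ j, p (v j) = 0)
    (th : Bg →ₐ[ℝ] Bh)
    (hth : ∀ a, th (ug a) = ∑ j : κ, ((Bgb.repr (↑(BI j) : g)) a) • w j)
    -- the homotopy τ : its values on generators and on the relevant products:
    (τ : A →ₗ[ℝ] Bh)
    (hτu : ∀ a, τ (u a) = 0)
    (hτv : ∀ j, τ (v j) = w j)
    (hτuu : ∀ x ∈ Submodule.span ℝ {z : A | ∃ b c : ι, z = u b * u c}, τ x = 0)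
    (hτmix : ∀ (b : ι) (k : κ),
      τ (u b * v k) = (-(1 : ℝ)/2) • (th (p (u b)) * w k)) :
    -- `[d, τ] = t* ∘ p` on the generators:
    (∀ a, dh (τ (u a)) + τ (d (u a)) = th (p (u a))) ∧
    (∀ j, dh (τ (v j)) + τ (d (v j)) = th (p (v j))) := by
  refine ⟨fun a => ?_, fun j => ?_⟩
  · have hquad : τ (∑ b, ∑ c, Bgb.repr ⁅Bgb b, Bgb c⁆ a • (u b * u c)) = 0 :=
      hτuu _ (sum_mem fun b _ => sum_mem fun c _ =>
        Submodule.smul_mem _ _ (Submodule.subset_span ⟨b, c, rfl⟩))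
    rw [hτu, map_zero, zero_add, hdu, map_add, map_smul, hquad, smul_zero, zero_add, hpu, hth,
      map_sum]
    simp only [map_smul, hτv]
  · rw [hτv, hdw, hdv, hpv, map_zero, map_neg, map_sum]
    simp only [map_sum, map_smul, hτmix, hpu, hth, smul_comm _ (-(1 : ℝ) / 2), ← Finset.smul_sum]
    rw [Finset.sum_sum_smul_sum_smul_mul]
    simp only [LieIdeal.sum_repr_mul_repr_lie]
    rw [Finset.sum_comm, ← smul_neg, ← smul_add, add_neg_cancel, smul_zero]

/-- **The mapping cone lies in the weak kernel of `t*`.**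
Let `I ⊆ g` be an ideal of a finite-dimensional real Lie algebra, `A` model the mapping
cone `CE(I ↪ g) = Λ•(g* ⊕ I*[1])` (odd generators `u a`, even generators `v j`), `Bg`
model `CE(g)` (generators `ug a`) and `Bh` model `CE(I)` (generators `w j`).  Let
`p : CE(I ↪ g) → CE(g)` be the canonical DGCA morphism (identity on `g*`, zero on
`I*[1]`) and `th : CE(g) → CE(I)` the restriction morphism `t*`.  Then the degree `-1`
map `τ` with `τ(σt* a) = t* a` (i.e. `τ (v j) = w j`) and `τ|_{g*} = 0`, extended
appropriately, satisfies `[d, τ] = t* ∘ p` on the generators; hence the composite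
`t* ∘ p` is chain homotopic to zero, exhibiting `CE(I ↪ g)` as lying in the weak kernel
of `t*`. -/
theorem mapping_cone_weak_kernel_homotopy
    {ι κ : Type*} [Fintype ι] [Fintype κ]
    (g : Type*) [LieRing g] [LieAlgebra ℝ g] (Bgb : Module.Basis ι ℝ g)
    (I : LieIdeal ℝ g) (BI : Module.Basis κ ℝ I)
    -- the mapping cone algebra A = CE(I ↪ g):
    (A : Type*) [Ring A] [Algebra ℝ A]
    (ε : A →ₐ[ℝ] A) (d : A →ₗ[ℝ] A)
    (heven : ∀ x y : A, ε x = x → x * y = y * x)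
    (hodd : ∀ x y : A, ε x = -x → ε y = -y → x * y = -(y * x))
    (hleib : ∀ x y : A, d (x * y) = d x * y + ε x * d y)
    (u : ι → A) (v : κ → A)
    (heu : ∀ a, ε (u a) = - u a)
    (hev : ∀ j, ε (v j) = v j)
    (hdu : ∀ a, d (u a) =
      (-(1 : ℝ)/2) • (∑ b : ι, ∑ c : ι, ((Bgb.repr ⁅Bgb b, Bgb c⁆) a) • (u b * u c))
        + ∑ j : κ, ((Bgb.repr (↑(BI j) : g)) a) • v j)
    (hdv : ∀ j, d (v j) =
      - ∑ b : ι, ∑ k : κ,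
          ((BI.repr ⟨⁅Bgb b, (↑(BI k) : g)⁆, I.lie_mem (BI k).2⟩) j) • (u b * v k))
    -- CE(g):
    (Bg : Type*) [Ring Bg] [Algebra ℝ Bg]
    (ug : ι → Bg)
    -- CE(I):
    (Bh : Type*) [Ring Bh] [Algebra ℝ Bh]
    (dh : Bh →ₗ[ℝ] Bh)
    (w : κ → Bh)
    (hdw : ∀ j, dh (w j) =
      (-(1 : ℝ)/2) • (∑ b : κ, ∑ c : κ,
        ((BI.repr ⟨⁅(↑(BI b) : g), (↑(BI c) : g)⁆, I.lie_mem (BI c).2⟩) j) • (w b * w c)))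
    -- the canonical projection p : CE(I ↪ g) → CE(g)  and the restriction t* :
    (p : A →ₐ[ℝ] Bg)
    (hpu : ∀ a, p (u a) = ug a)
    (hpv : ∀ j, p (v j) = 0)
    (th : Bg →ₐ[ℝ] Bh)
    (hth : ∀ a, th (ug a) = ∑ j : κ, ((Bgb.repr (↑(BI j) : g)) a) • w j)
    -- the homotopy τ : its values on generators and on the relevant products:
    (τ : A →ₗ[ℝ] Bh)
    (hτu : ∀ a, τ (u a) = 0)
    (hτv : ∀ j, τ (v j) = w j)
    (hτuu : ∀ x ∈ Submodule.span ℝ {z : A | ∃ b c : ι, z = u b * u c}, τ x = 0)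
    (hτmix : ∀ (b : ι) (k : κ),
      τ (u b * v k) = (-(1 : ℝ)/2) • (th (p (u b)) * w k)) :
    -- `[d, τ] = t* ∘ p` on the generators:
    (∀ a, dh (τ (u a)) + τ (d (u a)) = th (p (u a))) ∧
    (∀ j, dh (τ (v j)) + τ (d (v j)) = th (p (v j))) :=
  mapping_cone_weak_kernel_homotopy_general g Bgb I BI A d u v hdu hdv Bg ug Bh dh w hdw p hpu hpv
    th hth τ hτu hτv hτuu hτmix
end
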